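/- arXiv:2412.05757 — 3 statements merged into one kernel-verified Lean document; each statement's English description precedes it below -/
import Mathlib

section
/- Let f : [0,∞) → [0,∞) be a nondecreasing continuous function with f(x) > 0 for all x > 0 and ∫₁^∞ dx/f(x) < ∞, and let F(x) = ∫ₓ^∞ dt/f(t) (the antiderivative of −1/f vanishing at +∞). Let y : [0,∞) → [0,∞) be continuous, let g : [0,∞) → [0,∞) be locally integrable, and let y₀ > 0 be such that y(t) ≤ y₀ + ∫₀ᵗ g(s) ds + ∫₀ᵗ f(y(s)) ds for all t ≥ 0. Then there exists a unique T* > 0 satisfying T* = F(y₀ + ∫₀^{T*} g(s) ds), and for every T < T* one has sup_{t ≤ T} y(t) ≤ F⁻¹( F(y₀ + ∫₀^T g(s) ds) − T ), where F⁻¹ denotes the inverse of the strictly decreasing function F on its range. -/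
open MeasureTheory Set

/-!
Fix `T` and put `w s = y₀ + ∫₀ᵀ g + ∫₀ˢ f ∘ y`. Then `y ≤ w` on `[0, T]`, so
`w' = f ∘ y ≤ f ∘ w` and `(F ∘ w)' = -w' / f (w) ≥ -1`. Hence `F (w t) ≥ F (w 0) - t`, and
inverting the decreasing function `F` gives the bound. The existence and uniqueness of `T*` is the
intermediate value theorem for the strictly decreasing function `T ↦ F (y₀ + ∫₀ᵀ g) - T`.
-/

section TailIntegral

variable {φ : ℝ → ℝ} {a b : ℝ}

theorem integrableOn_Ioi_of_continuousOn_Ici {c : ℝ} (hφ : ContinuousOn φ (Ici a))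
    (hc : IntegrableOn φ (Ioi c)) : IntegrableOn φ (Ioi a) := by
  refine ((hφ.mono (Icc_subset_Ici_self : Icc a c ⊆ Ici a)).integrableOn_Icc.union hc).mono_set
    fun x hx => ?_
  rcases le_or_gt x c with hxc | hxc
  · exact Or.inl ⟨hx.le, hxc⟩
  · exact Or.inr hxc

theorem integral_Ioi_lt_integral_Ioi (hφ : IntegrableOn φ (Ioi a))
    (hpos : ∀ t ∈ Ioo a b, 0 < φ t) (hab : a < b) :
    ∫ t in Ioi b, φ t < ∫ t in Ioi a, φ t := by
  rw [← sub_pos, intervalIntegral.integral_Ioi_sub_Ioi hφ hab.le]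
  refine intervalIntegral.intervalIntegral_pos_of_pos_on ?_ hpos hab
  exact (intervalIntegrable_iff_integrableOn_Ioc_of_le hab.le).2 (hφ.mono_set Ioc_subset_Ioi_self)

theorem integral_Ioi_pos (hφ : IntegrableOn φ (Ioi a)) (hpos : ∀ t ∈ Ioi a, 0 < φ t) :
    0 < ∫ t in Ioi a, φ t := by
  have hnonneg : 0 ≤ ∫ t in Ioi (a + 1), φ t :=
    setIntegral_nonneg measurableSet_Ioi fun t ht => (hpos t ((lt_add_one a).trans ht)).le
  exact hnonneg.trans_lt
    (integral_Ioi_lt_integral_Ioi hφ (fun t ht => hpos t ht.1) (lt_add_one a))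

theorem hasDerivAt_integral_Ioi (hφ : IntegrableOn φ (Ioi a)) (hab : a < b)
    (hcont : ContinuousAt φ b) : HasDerivAt (fun x => ∫ t in Ioi x, φ t) (-φ b) b := by
  have hprim : HasDerivAt (fun x => (∫ t in Ioi a, φ t) - ∫ t in a..x, φ t) (-φ b) b := by
    refine (intervalIntegral.integral_hasDerivAt_right ?_ ?_ hcont).const_sub _
    · exact (intervalIntegrable_iff_integrableOn_Ioc_of_le hab.le).2
        (hφ.mono_set Ioc_subset_Ioi_self)
    · exact AEStronglyMeasurable.stronglyMeasurableAtFilter_of_mem hφ.aestronglyMeasurable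
        (Ioi_mem_nhds hab)
  refine hprim.congr_of_eventuallyEq ?_
  filter_upwards [Ioi_mem_nhds hab] with x hx
  rw [← intervalIntegral.integral_Ioi_sub_Ioi hφ hx.le, sub_sub_cancel]

end TailIntegral

section TailIntegralOnPositives

variable {φ F : ℝ → ℝ}

theorem strictAntiOn_of_eq_integral_Ioi (hφ : ContinuousOn φ (Ioi 0))
    (hint : IntegrableOn φ (Ioi 1)) (hpos : ∀ x ∈ Ioi 0, 0 < φ x)
    (hF : ∀ x ∈ Ioi 0, F x = ∫ t in Ioi x, φ t) : StrictAntiOn F (Ioi 0) := by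
  intro a ha b hb hab
  rw [hF a ha, hF b hb]
  exact integral_Ioi_lt_integral_Ioi
    (integrableOn_Ioi_of_continuousOn_Ici (hφ.mono (Ici_subset_Ioi.2 ha)) hint)
    (fun t ht => hpos t (ha.trans ht.1)) hab

theorem pos_of_eq_integral_Ioi (hφ : ContinuousOn φ (Ioi 0)) (hint : IntegrableOn φ (Ioi 1))
    (hpos : ∀ x ∈ Ioi 0, 0 < φ x) (hF : ∀ x ∈ Ioi 0, F x = ∫ t in Ioi x, φ t) {x : ℝ}
    (hx : 0 < x) : 0 < F x := by
  rw [hF x hx]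
  exact integral_Ioi_pos
    (integrableOn_Ioi_of_continuousOn_Ici (hφ.mono (Ici_subset_Ioi.2 hx)) hint)
    (fun t ht => hpos t (hx.trans ht))

theorem hasDerivAt_of_eq_integral_Ioi (hφ : ContinuousOn φ (Ioi 0))
    (hint : IntegrableOn φ (Ioi 1)) (hF : ∀ x ∈ Ioi 0, F x = ∫ t in Ioi x, φ t) {x : ℝ}
    (hx : 0 < x) : HasDerivAt F (-φ x) x := by
  have hφ_half : IntegrableOn φ (Ioi (x / 2)) :=
    integrableOn_Ioi_of_continuousOn_Ici (hφ.mono (Ici_subset_Ioi.2 (half_pos hx))) hint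
  refine (hasDerivAt_integral_Ioi hφ_half (half_lt_self hx)
    (hφ.continuousAt (Ioi_mem_nhds hx))).congr_of_eventuallyEq ?_
  filter_upwards [Ioi_mem_nhds hx] with u hu using hF u hu

end TailIntegralOnPositives

section Primitive

variable {g : ℝ → ℝ} {a : ℝ}

theorem MeasureTheory.LocallyIntegrableOn.intervalIntegrable_of_mem_Ici
    (hg : LocallyIntegrableOn g (Ici a))
    {b c : ℝ} (hb : a ≤ b) (hc : a ≤ c) : IntervalIntegrable g volume b c :=
  (hg.integrableOn_compact_subset (fun _ hx => le_trans (le_inf hb hc) hx.1)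
    isCompact_uIcc).intervalIntegrable

theorem MeasureTheory.LocallyIntegrableOn.continuousOn_primitive_Ici
    (hg : LocallyIntegrableOn g (Ici a)) :
    ContinuousOn (fun x => ∫ t in a..x, g t) (Ici a) := by
  intro x hx
  have hax : a ≤ x + 1 := hx.trans (le_add_of_nonneg_right zero_le_one)
  have hcont := intervalIntegral.continuousOn_primitive_interval'
    (hg.intervalIntegrable_of_mem_Ici le_rfl hax) left_mem_uIcc
  rw [uIcc_of_le hax, ← Ici_inter_Iic] at hcont
  exact (hcont x ⟨hx, (lt_add_one x).le⟩).mono_of_mem_nhdsWithin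
    (inter_mem_nhdsWithin _ (Iic_mem_nhds (lt_add_one x)))

theorem MeasureTheory.LocallyIntegrableOn.monotoneOn_primitive_Ici
    (hg : LocallyIntegrableOn g (Ici a))
    (hg₀ : ∀ t ∈ Ici a, 0 ≤ g t) : MonotoneOn (fun x => ∫ t in a..x, g t) (Ici a) := by
  intro x hx z hz hxz
  dsimp only
  rw [← intervalIntegral.integral_add_adjacent_intervals
    (hg.intervalIntegrable_of_mem_Ici le_rfl hx) (hg.intervalIntegrable_of_mem_Ici hx hz)]
  exact le_add_of_nonneg_right
    (intervalIntegral.integral_nonneg hxz fun t ht => hg₀ t (hx.trans ht.1))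

theorem ContinuousOn.hasDerivAt_primitive_Ici (hg : ContinuousOn g (Ici a)) {x : ℝ}
    (hx : a < x) : HasDerivAt (fun x => ∫ t in a..x, g t) (g x) x :=
  intervalIntegral.integral_hasDerivAt_right
    ((hg.locallyIntegrableOn measurableSet_Ici).intervalIntegrable_of_mem_Ici le_rfl hx.le)
    ((hg.mono Ioi_subset_Ici_self).stronglyMeasurableAtFilter isOpen_Ioi x hx)
    (hg.continuousAt (Ici_mem_nhds hx))

end Primitive

theorem existsUnique_pos_eq_of_antitoneOn {h : ℝ → ℝ} (hcont : ContinuousOn h (Ici 0))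
    (hanti : AntitoneOn h (Ici 0)) (h0 : 0 < h 0) : ∃! T, 0 < T ∧ T = h T := by
  have hshift_anti : StrictAntiOn (fun T => h T - T) (Ici 0) := fun x hx z hz hxz => by
    have := hanti hx hz hxz.le
    dsimp only
    linarith
  have hh0 : h (h 0) ≤ h 0 := hanti self_mem_Ici h0.le h0.le
  obtain ⟨T, hT, hT0⟩ : ∃ T ∈ Icc 0 (h 0), h T - T = 0 :=
    intermediate_value_Icc' h0.le ((hcont.mono Icc_subset_Ici_self).sub continuousOn_id)
      ⟨by simpa using hh0, by simpa using h0.le⟩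
  have hT_pos : 0 < T := hT.1.lt_of_ne fun hT' => by rw [← hT'] at hT0; linarith
  refine ⟨T, ⟨hT_pos, by linarith⟩, fun T' ⟨hT'_pos, hT'⟩ => ?_⟩
  exact hshift_anti.injOn hT'_pos.le hT.1 (show h T' - T' = h T - T by linarith)

theorem monotoneOn_comp_add_of_hasDerivAt_le {F f w w' : ℝ → ℝ} {a b : ℝ}
    (hFw : ContinuousOn (fun s => F (w s)) (Icc a b))
    (hF : ∀ s ∈ Ioo a b, HasDerivAt F (-(1 / f (w s))) (w s))
    (hw : ∀ s ∈ Ioo a b, HasDerivAt w (w' s) s)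
    (hf : ∀ s ∈ Ioo a b, 0 < f (w s)) (hw' : ∀ s ∈ Ioo a b, w' s ≤ f (w s)) :
    MonotoneOn (fun s => F (w s) + s) (Icc a b) := by
  refine monotoneOn_of_hasDerivWithinAt_nonneg (convex_Icc a b) (hFw.add continuousOn_id)
    (f' := fun s => -(1 / f (w s)) * w' s + 1) ?_ ?_ <;> rw [interior_Icc] <;> intro s hs
  · exact (((hF s hs).comp s (hw s hs)).add (hasDerivAt_id s)).hasDerivWithinAt
  · have hratio : w' s / f (w s) ≤ 1 := (div_le_one (hf s hs)).2 (hw' s hs)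
    rw [neg_mul, one_div_mul_eq_div]
    linarith

theorem bihari_le_of_le_add_integral {f F y : ℝ → ℝ} {A t z : ℝ}
    (hf_mono : MonotoneOn f (Ici 0)) (hf_cont : ContinuousOn f (Ici 0))
    (hf_nonneg : ∀ x ∈ Ici 0, 0 ≤ f x) (hf_pos : ∀ x ∈ Ioi 0, 0 < f x)
    (hF_anti : StrictAntiOn F (Ioi 0)) (hF : ∀ x ∈ Ioi 0, HasDerivAt F (-(1 / f x)) x)
    (hy_cont : ContinuousOn y (Ici 0)) (hy_nonneg : ∀ s ∈ Ici 0, 0 ≤ y s) (hA : 0 < A)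
    (ht : 0 ≤ t) (hy : ∀ s ∈ Icc 0 t, y s ≤ A + ∫ r in 0..s, f (y r))
    (hz : 0 < z) (hFz : F z ≤ F A - t) : y t ≤ z := by
  set w : ℝ → ℝ := fun s => A + ∫ r in 0..s, f (y r)
  have hfy : ContinuousOn (fun r => f (y r)) (Ici 0) := hf_cont.comp hy_cont hy_nonneg
  have hw_cont : ContinuousOn w (Ici 0) :=
    continuousOn_const.add (hfy.locallyIntegrableOn measurableSet_Ici).continuousOn_primitive_Ici
  have hw_pos : ∀ s ∈ Ici 0, 0 < w s := fun s hs =>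
    lt_add_of_pos_of_le hA
      (intervalIntegral.integral_nonneg hs fun r hr => hf_nonneg _ (hy_nonneg r hr.1))
  have hmono : MonotoneOn (fun s => F (w s) + s) (Icc 0 t) := by
    refine monotoneOn_comp_add_of_hasDerivAt_le (w' := fun s => f (y s))
      (fun s hs => ?_) (fun s hs => hF _ (hw_pos s hs.1.le))
      (fun s hs => (hfy.hasDerivAt_primitive_Ici hs.1).const_add A)
      (fun s hs => hf_pos _ (hw_pos s hs.1.le)) (fun s hs => ?_)
    · exact (hF _ (hw_pos s hs.1)).continuousAt.comp_continuousWithinAt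
        ((hw_cont s hs.1).mono Icc_subset_Ici_self)
    · exact hf_mono (hy_nonneg s hs.1.le) (hw_pos s hs.1.le).le (hy s (Ioo_subset_Icc_self hs))
  have hFw : F A ≤ F (w t) + t := by
    simpa [w] using hmono ⟨le_rfl, ht⟩ ⟨ht, le_rfl⟩ ht
  have hwz : w t ≤ z := (hF_anti.le_iff_ge hz (hw_pos t ht)).1 (by linarith)
  exact (hy t ⟨ht, le_rfl⟩).trans hwz

/-- **Bihari's inequality.** If `f : [0,∞) → [0,∞)` is nondecreasing, continuous,
positive on `(0,∞)` with `∫₁^∞ dx / f x < ∞`, `F x = ∫ₓ^∞ dt / f t`, `y` is continuous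
nonnegative, `g` is nonnegative and locally integrable, `y₀ > 0` and
`y t ≤ y₀ + ∫₀ᵗ g + ∫₀ᵗ f (y s) ds` for all `t ≥ 0`, then there is a unique `T* > 0` with
`T* = F (y₀ + ∫₀^{T*} g)`, and for `T < T*`, `sup_{t ≤ T} y t ≤ F⁻¹ (F (y₀ + ∫₀^T g) - T)`
(the inverse value `z` being characterized by `F z = F (y₀ + ∫₀^T g) - T`, `z > 0`). -/
theorem bihari_inequality
    (f : ℝ → ℝ)
    (hf_mono : MonotoneOn f (Set.Ici 0))
    (hf_cont : ContinuousOn f (Set.Ici 0))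
    (hf_nonneg : ∀ x, 0 ≤ x → 0 ≤ f x)
    (hf_pos : ∀ x, 0 < x → 0 < f x)
    (hf_int : IntegrableOn (fun x => 1 / f x) (Set.Ioi (1 : ℝ)))
    (F : ℝ → ℝ)
    (hF : ∀ x, 0 < x → F x = ∫ t in Set.Ioi x, 1 / f t)
    (y : ℝ → ℝ)
    (hy_cont : ContinuousOn y (Set.Ici 0))
    (hy_nonneg : ∀ t, 0 ≤ t → 0 ≤ y t)
    (g : ℝ → ℝ)
    (hg_nonneg : ∀ t, 0 ≤ t → 0 ≤ g t)
    (hg_loc : LocallyIntegrableOn g (Set.Ici 0))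
    (y₀ : ℝ) (hy₀ : 0 < y₀)
    (hineq : ∀ t, 0 ≤ t →
      y t ≤ y₀ + (∫ s in (0:ℝ)..t, g s) + ∫ s in (0:ℝ)..t, f (y s)) :
    (∃! Tstar : ℝ, 0 < Tstar ∧ Tstar = F (y₀ + ∫ s in (0:ℝ)..Tstar, g s)) ∧
    (∀ Tstar : ℝ, (0 < Tstar ∧ Tstar = F (y₀ + ∫ s in (0:ℝ)..Tstar, g s)) →
      ∀ T, 0 ≤ T → T < Tstar →
        ∀ z, 0 < z → F z = F (y₀ + ∫ s in (0:ℝ)..T, g s) - T →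
          ∀ t, 0 ≤ t → t ≤ T → y t ≤ z) := by
  have hφ_cont : ContinuousOn (fun x => 1 / f x) (Ioi 0) :=
    continuousOn_const.div (hf_cont.mono Ioi_subset_Ici_self) fun x hx => (hf_pos x hx).ne'
  have hφ_pos (x : ℝ) (hx : 0 < x) : 0 < 1 / f x := one_div_pos.2 (hf_pos x hx)
  have hF_anti := strictAntiOn_of_eq_integral_Ioi hφ_cont hf_int hφ_pos hF
  have hF_deriv (x : ℝ) (hx : 0 < x) : HasDerivAt F (-(1 / f x)) x :=
    hasDerivAt_of_eq_integral_Ioi hφ_cont hf_int hF hx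
  have hG_mono := hg_loc.monotoneOn_primitive_Ici hg_nonneg
  have hG_pos (T : ℝ) (hT : 0 ≤ T) : 0 < y₀ + ∫ s in (0:ℝ)..T, g s := by
    have := hG_mono self_mem_Ici hT hT
    simp only [intervalIntegral.integral_same] at this
    linarith
  refine ⟨existsUnique_pos_eq_of_antitoneOn ?_ ?_ ?_, ?_⟩
  · have hF_cont : ContinuousOn F (Ioi 0) := fun x hx =>
      (hF_deriv x hx).continuousAt.continuousWithinAt
    exact hF_cont.comp (continuousOn_const.add hg_loc.continuousOn_primitive_Ici) hG_pos
  · exact hF_anti.antitoneOn.comp_MonotoneOn (monotoneOn_const.add hG_mono) hG_pos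
  · rw [intervalIntegral.integral_same, add_zero]
    exact pos_of_eq_integral_Ioi hφ_cont hf_int hφ_pos hF hy₀
  rintro - - T hT - z hz hFz t ht htT
  refine bihari_le_of_le_add_integral hf_mono hf_cont hf_nonneg hf_pos hF_anti hF_deriv
    hy_cont hy_nonneg (hG_pos T hT) ht (fun s hs => ?_) hz (by linarith)
  have := hG_mono hs.1 hT (hs.2.trans htT)
  linarith [hineq s hs.1]
end

section
/- Let E₀ ≥ 0, B ≥ 0, C > 0 and T > 0 satisfy 1 − C·E₀·T − C·B·T² > 0. If y : [0,T] → [0,∞) is continuous and satisfies y(t) ≤ E₀ + B·t + C·∫₀ᵗ y(s)² ds for all t ∈ [0,T], then sup_{t ∈ [0,T]} y(t) ≤ (E₀ + B·T)/(1 − C·E₀·T − C·B·T²). -/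
/-!
Put `R t = a + C ∫₀ᵗ y²` with `a > 0`. The hypothesis reads `0 ≤ y ≤ R`, so `R' = C y² ≤ C R²`,
i.e. `t ↦ 1 / R t + C t` is nondecreasing; hence `1 / R t ≥ 1 / a - C t`, which is
`y t ≤ R t ≤ a / (1 - C a t)` while `C a t < 1`. Since this needs `a > 0`, it is applied to every
`a > A = E₀ + B T` and `a ↓ A`.
-/

open MeasureTheory Set Filter Topology

theorem inv_sub_mul_le_inv_of_hasDerivAt_le_sq {R R' : ℝ → ℝ} {C a b : ℝ}
    (hR : ContinuousOn R (Icc a b)) (hR' : ∀ t ∈ Ioo a b, HasDerivAt R (R' t) t)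
    (hR'_le : ∀ t ∈ Ioo a b, R' t ≤ C * R t ^ 2) (hR_pos : ∀ t ∈ Icc a b, 0 < R t) :
    ∀ t ∈ Icc a b, (R a)⁻¹ - C * (t - a) ≤ (R t)⁻¹ := by
  have hmono : MonotoneOn (fun t => (R t)⁻¹ + C * t) (Icc a b) := by
    refine monotoneOn_of_hasDerivWithinAt_nonneg (convex_Icc a b)
      ((hR.inv₀ fun t ht => (hR_pos t ht).ne').add (continuousOn_const.mul continuousOn_id))
      (f' := fun t => -R' t / R t ^ 2 + C) (fun t ht => ?_) (fun t ht => ?_)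
    all_goals
      rw [interior_Icc] at ht
      have hRt := hR_pos t (Ioo_subset_Icc_self ht)
    · exact (((hR' t ht).inv hRt.ne').add ((hasDerivAt_id t).const_mul C)).hasDerivWithinAt
        |>.congr_deriv (by simp)
    · have : R' t / R t ^ 2 ≤ C := (div_le_iff₀ (by positivity)).2 (hR'_le t ht)
      rw [neg_div]
      linarith
  intro t ht
  have := hmono (left_mem_Icc.2 (ht.1.trans ht.2)) ht ht.1
  simp only at this
  linarith

theorem le_div_of_le_add_mul_integral_sq_of_pos {y : ℝ → ℝ} {a C T : ℝ} (ha : 0 < a) (hC : 0 ≤ C)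
    (hy_cont : ContinuousOn y (Icc 0 T)) (hy_nonneg : ∀ t ∈ Icc 0 T, 0 ≤ y t)
    (hineq : ∀ t ∈ Icc 0 T, y t ≤ a + C * ∫ s in (0:ℝ)..t, y s ^ 2) :
    ∀ t ∈ Icc 0 T, C * a * t < 1 → y t ≤ a / (1 - C * a * t) := by
  intro t ht hlt
  set R : ℝ → ℝ := fun t => a + C * ∫ s in (0:ℝ)..t, y s ^ 2
  have hy2_cont : ContinuousOn (fun s => y s ^ 2) (Icc 0 T) := hy_cont.pow 2
  have hR_pos : ∀ t ∈ Icc 0 T, 0 < R t := fun t ht => by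
    have : 0 ≤ ∫ s in (0:ℝ)..t, y s ^ 2 :=
      intervalIntegral.integral_nonneg ht.1 fun _ _ => sq_nonneg _
    positivity
  have hR_cont : ContinuousOn R (Icc 0 T) := by
    have hT : 0 ≤ T := ht.1.trans ht.2
    refine continuousOn_const.add (continuousOn_const.mul ?_)
    exact uIcc_of_le hT ▸ intervalIntegral.continuousOn_primitive_interval'
      (hy2_cont.intervalIntegrable_of_Icc hT) left_mem_uIcc
  have hR' : ∀ t ∈ Ioo 0 T, HasDerivAt R (C * y t ^ 2) t := by
    intro t ht
    refine (intervalIntegral.integral_hasDerivAt_right ?_ ?_ ?_).const_mul C |>.const_add a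
    · exact (hy2_cont.mono (Icc_subset_Icc le_rfl ht.2.le)).intervalIntegrable_of_Icc ht.1.le
    · exact (hy2_cont.mono Ioo_subset_Icc_self).stronglyMeasurableAtFilter isOpen_Ioo t ht
    · exact hy2_cont.continuousAt (Icc_mem_nhds ht.1 ht.2)
  have hR'_le : ∀ t ∈ Ioo 0 T, C * y t ^ 2 ≤ C * R t ^ 2 := fun t ht =>
    have ht := Ioo_subset_Icc_self ht
    mul_le_mul_of_nonneg_left (pow_le_pow_left₀ (hy_nonneg t ht) (hineq t ht) 2) hC
  have hinv := inv_sub_mul_le_inv_of_hasDerivAt_le_sq hR_cont hR' hR'_le hR_pos t ht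
  have hR0 : R 0 = a := by simp [R]
  rw [hR0, sub_zero] at hinv
  have hx : a⁻¹ - C * t = (1 - C * a * t) / a := by field_simp
  calc y t ≤ R t := hineq t ht
    _ ≤ (a⁻¹ - C * t)⁻¹ :=
      (le_inv_comm₀ (hx ▸ div_pos (by linarith) ha) (hR_pos t ht)).1 hinv
    _ = a / (1 - C * a * t) := by rw [hx, inv_div]

theorem le_div_of_le_add_mul_integral_sq {y : ℝ → ℝ} {A C T : ℝ} (hA : 0 ≤ A) (hC : 0 ≤ C)
    (hy_cont : ContinuousOn y (Icc 0 T)) (hy_nonneg : ∀ t ∈ Icc 0 T, 0 ≤ y t)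
    (hineq : ∀ t ∈ Icc 0 T, y t ≤ A + C * ∫ s in (0:ℝ)..t, y s ^ 2) :
    ∀ t ∈ Icc 0 T, C * A * t < 1 → y t ≤ A / (1 - C * A * t) := by
  intro t ht hlt
  have hlim : Tendsto (fun a => a / (1 - C * a * t)) (𝓝[>] A) (𝓝 (A / (1 - C * A * t))) :=
    (ContinuousAt.div (by fun_prop) (by fun_prop) (by linarith)).tendsto.mono_left
      nhdsWithin_le_nhds
  have hsmall : ∀ᶠ a in 𝓝 A, C * a * t < 1 :=
    (show ContinuousAt (fun a => C * a * t) A by fun_prop).eventually_lt continuousAt_const hlt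
  have hbound : ∀ᶠ a in 𝓝[>] A, y t ≤ a / (1 - C * a * t) := by
    filter_upwards [self_mem_nhdsWithin, nhdsWithin_le_nhds hsmall] with a (haA : A < a) hat
    refine le_div_of_le_add_mul_integral_sq_of_pos (hA.trans_lt haA) hC hy_cont hy_nonneg
      (fun s hs => (hineq s hs).trans ?_) t ht hat
    linarith
  exact ge_of_tendsto hlim hbound

theorem bihari_quadratic_general
    (E₀ B C T : ℝ) (hE₀ : 0 ≤ E₀) (hB : 0 ≤ B) (hC : 0 < C)
    (hden : 0 < 1 - C * E₀ * T - C * B * T ^ 2)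
    (y : ℝ → ℝ)
    (hy_cont : ContinuousOn y (Set.Icc 0 T))
    (hy_nonneg : ∀ t ∈ Set.Icc (0:ℝ) T, 0 ≤ y t)
    (hineq : ∀ t ∈ Set.Icc (0:ℝ) T,
      y t ≤ E₀ + B * t + C * ∫ s in (0:ℝ)..t, (y s) ^ 2) :
    ∀ t ∈ Set.Icc (0:ℝ) T,
      y t ≤ (E₀ + B * T) / (1 - C * E₀ * T - C * B * T ^ 2) := by
  intro t ht
  set A := E₀ + B * T
  have hA : 0 ≤ A := add_nonneg hE₀ (mul_nonneg hB (ht.1.trans ht.2))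
  have hineqA : ∀ u ∈ Icc 0 T, y u ≤ A + C * ∫ s in (0:ℝ)..u, y s ^ 2 := fun u hu => by
    have := mul_le_mul_of_nonneg_left hu.2 hB
    linarith [hineq u hu]
  have hden_eq : 1 - C * E₀ * T - C * B * T ^ 2 = 1 - C * A * T := by ring
  have hAt : C * A * t ≤ C * A * T := mul_le_mul_of_nonneg_left ht.2 (mul_nonneg hC.le hA)
  rw [hden_eq] at hden ⊢
  calc y t ≤ A / (1 - C * A * t) :=
        le_div_of_le_add_mul_integral_sq hA hC.le hy_cont hy_nonneg hineqA t ht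
          (by linarith)
    _ ≤ A / (1 - C * A * T) := div_le_div_of_nonneg_left hA hden (by linarith)

/-- Quadratic-nonlinearity case of Bihari's inequality: if
`y t ≤ E₀ + B t + C ∫₀ᵗ y(s)² ds` on `[0,T]` with `1 - C E₀ T - C B T² > 0`, then
`sup_{[0,T]} y ≤ (E₀ + B T) / (1 - C E₀ T - C B T²)`. -/
theorem bihari_quadratic
    (E₀ B C T : ℝ) (hE₀ : 0 ≤ E₀) (hB : 0 ≤ B) (hC : 0 < C) (hT : 0 < T)
    (hden : 0 < 1 - C * E₀ * T - C * B * T ^ 2)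
    (y : ℝ → ℝ)
    (hy_cont : ContinuousOn y (Set.Icc 0 T))
    (hy_nonneg : ∀ t ∈ Set.Icc (0:ℝ) T, 0 ≤ y t)
    (hineq : ∀ t ∈ Set.Icc (0:ℝ) T,
      y t ≤ E₀ + B * t + C * ∫ s in (0:ℝ)..t, (y s) ^ 2) :
    ∀ t ∈ Set.Icc (0:ℝ) T,
      y t ≤ (E₀ + B * T) / (1 - C * E₀ * T - C * B * T ^ 2) :=
  bihari_quadratic_general E₀ B C T hE₀ hB hC hden y hy_cont hy_nonneg hineq
end

section
/- For every ε ∈ (0, 1 − √(1 − λ₂/λ₁)) and every s ∈ (−1, 1), F_ε(s) ≤ F(s); equivalently, G_ε(s) ≤ G(s) for all s ∈ (−1, 1). -/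
/-- The logarithmic part `G(s) = (λ₂/2)[(1+s)ln((1+s)/2) + (1−s)ln((1−s)/2)]`. -/
noncomputable def Glog (l2 s : ℝ) : ℝ :=
  l2 / 2 * ((1 + s) * Real.log ((1 + s) / 2) + (1 - s) * Real.log ((1 - s) / 2))

/-- Its first derivative `G'(s) = (λ₂/2)ln((1+s)/(1−s))` on `(−1,1)`. -/
noncomputable def GlogD (l2 s : ℝ) : ℝ :=
  l2 / 2 * Real.log ((1 + s) / (1 - s))

/-- Its second derivative `G''(s) = λ₂/(1−s²)` on `(−1,1)`. -/
noncomputable def GlogDD (l2 s : ℝ) : ℝ :=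
  l2 / (1 - s ^ 2)

/-- The regularization `G_ε` of `G`: the second-order Taylor polynomial of `G` at
`1−ε` (resp. `−1+ε`) for `s ≥ 1−ε` (resp. `s ≤ −1+ε`), and `G` itself in between. -/
noncomputable def Geps (l2 ε s : ℝ) : ℝ :=
  if 1 - ε ≤ s then
    Glog l2 (1 - ε) + GlogD l2 (1 - ε) * (s - (1 - ε))
      + GlogDD l2 (1 - ε) / 2 * (s - (1 - ε)) ^ 2
  else if s ≤ -1 + ε then
    Glog l2 (-1 + ε) + GlogD l2 (-1 + ε) * (s - (-1 + ε))
      + GlogDD l2 (-1 + ε) / 2 * (s - (-1 + ε)) ^ 2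
  else Glog l2 s

/-- The logarithmic potential `F(s) = (λ₁/2)(1 − s²) + G(s)`. -/
noncomputable def Flog (l1 l2 s : ℝ) : ℝ :=
  l1 / 2 * (1 - s ^ 2) + Glog l2 s

/-- The regularized potential `F_ε(s) = (λ₁/2)(1 − s²) + G_ε(s)`. -/
noncomputable def Feps (l1 l2 ε s : ℝ) : ℝ :=
  l1 / 2 * (1 - s ^ 2) + Geps l2 ε s

/-! `G''(s) = λ₂/(1 − s²)` grows with `|s|`, so on `[1 − ε, 1)` the function `G` is at least as
convex as its second-order Taylor polynomial at `1 − ε`, which therefore stays below `G` there;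
the left end follows from the symmetry `G(−s) = G(s)`. -/

open Set

theorem monotoneOn_Icc_of_hasDerivAt_nonneg {g g' : ℝ → ℝ} {a b : ℝ}
    (hg : ∀ t ∈ Icc a b, HasDerivAt g (g' t) t) (hg' : ∀ t ∈ Ioo a b, 0 ≤ g' t) :
    MonotoneOn g (Icc a b) :=
  monotoneOn_of_hasDerivWithinAt_nonneg (convex_Icc a b)
    (fun t ht => (hg t ht).continuousAt.continuousWithinAt)
    (fun t ht => (hg t (interior_subset ht)).hasDerivWithinAt)
    (by rwa [interior_Icc])

theorem taylor_two_le_of_deriv2_ge {f f' f'' : ℝ → ℝ} {a b : ℝ} (hab : a ≤ b)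
    (hf : ∀ t ∈ Icc a b, HasDerivAt f (f' t) t)
    (hf' : ∀ t ∈ Icc a b, HasDerivAt f' (f'' t) t)
    (hf'' : ∀ t ∈ Icc a b, f'' a ≤ f'' t) :
    f a + f' a * (b - a) + f'' a / 2 * (b - a) ^ 2 ≤ f b := by
  have ha : a ∈ Icc a b := left_mem_Icc.mpr hab
  have hb : b ∈ Icc a b := right_mem_Icc.mpr hab
  have hderiv_gap : MonotoneOn (fun t => f' t - f'' a * (t - a)) (Icc a b) := by
    refine monotoneOn_Icc_of_hasDerivAt_nonneg (g' := fun t => f'' t - f'' a * 1)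
      (fun t ht => (hf' t ht).sub (((hasDerivAt_id t).sub_const a).const_mul _)) ?_
    intro t ht
    linarith [hf'' t (Ioo_subset_Icc_self ht)]
  have hremainder :
      MonotoneOn (fun t => f t - (f' a * (t - a) + f'' a / 2 * (t - a) ^ 2)) (Icc a b) := by
    refine monotoneOn_Icc_of_hasDerivAt_nonneg
      (g' := fun t => f' t - (f' a * 1 + f'' a / 2 * (2 * (t - a) ^ 1 * 1)))
      (fun t ht => (hf t ht).sub ((((hasDerivAt_id t).sub_const a).const_mul _).add
        ((((hasDerivAt_id t).sub_const a).pow 2).const_mul _))) ?_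
    intro t ht
    have := hderiv_gap ha (Ioo_subset_Icc_self ht) ht.1.le
    simp only [sub_self, mul_zero, sub_zero] at this
    linarith
  have := hremainder ha hb hab
  simp only [sub_self, mul_zero, zero_add, ne_eq, OfNat.ofNat_ne_zero, not_false_eq_true,
    zero_pow, sub_zero] at this
  linarith

theorem hasDerivAt_Glog (l2 : ℝ) {s : ℝ} (hs : s ∈ Ioo (-1) 1) :
    HasDerivAt (Glog l2) (GlogD l2 s) s := by
  have hp : 0 < 1 + s := by linarith [hs.1]
  have hm : 0 < 1 - s := by linarith [hs.2]
  have dp : HasDerivAt (fun t : ℝ => 1 + t) 1 s := (hasDerivAt_id s).const_add 1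
  have dm : HasDerivAt (fun t : ℝ => 1 - t) (-1) s := by
    simpa using (hasDerivAt_id s).const_sub 1
  have d := ((dp.mul ((dp.div_const 2).log (by positivity))).add
    (dm.mul ((dm.div_const 2).log (by positivity)))).const_mul (l2 / 2)
  refine d.congr_deriv ?_
  rw [GlogD, Real.log_div hp.ne' hm.ne', Real.log_div hp.ne' two_ne_zero,
    Real.log_div hm.ne' two_ne_zero]
  field_simp
  ring

theorem hasDerivAt_GlogD (l2 : ℝ) {s : ℝ} (hs : s ∈ Ioo (-1) 1) :
    HasDerivAt (GlogD l2) (GlogDD l2 s) s := by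
  have hp : 0 < 1 + s := by linarith [hs.1]
  have hm : 0 < 1 - s := by linarith [hs.2]
  have dp : HasDerivAt (fun t : ℝ => 1 + t) 1 s := (hasDerivAt_id s).const_add 1
  have dm : HasDerivAt (fun t : ℝ => 1 - t) (-1) s := by
    simpa using (hasDerivAt_id s).const_sub 1
  have dq : HasDerivAt (fun t => (1 + t) / (1 - t))
      ((1 * (1 - s) - (1 + s) * -1) / (1 - s) ^ 2) s := dp.div dm hm.ne'
  have d := (dq.log (div_pos hp hm).ne').const_mul (l2 / 2)
  refine d.congr_deriv ?_
  rw [GlogDD, show (1 : ℝ) - s ^ 2 = (1 - s) * (1 + s) by ring]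
  field_simp
  ring

theorem GlogDD_le_GlogDD {l2 a t : ℝ} (hl2 : 0 ≤ l2) (hat : a ^ 2 ≤ t ^ 2) (ht : t ^ 2 < 1) :
    GlogDD l2 a ≤ GlogDD l2 t :=
  div_le_div_of_nonneg_left hl2 (by linarith) (by linarith)

theorem Glog_neg (l2 s : ℝ) : Glog l2 (-s) = Glog l2 s := by
  rw [Glog, Glog, sub_neg_eq_add, ← sub_eq_add_neg]
  ring

theorem GlogD_neg (l2 s : ℝ) : GlogD l2 (-s) = -GlogD l2 s := by
  rw [GlogD, GlogD, sub_neg_eq_add, ← sub_eq_add_neg, ← inv_div (1 + s), Real.log_inv, mul_neg]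

theorem GlogDD_neg (l2 s : ℝ) : GlogDD l2 (-s) = GlogDD l2 s := by
  rw [GlogDD, GlogDD, neg_sq]

theorem taylor_Glog_le_of_le {l2 a s : ℝ} (hl2 : 0 ≤ l2) (ha : 0 ≤ a) (has : a ≤ s)
    (hs : s < 1) :
    Glog l2 a + GlogD l2 a * (s - a) + GlogDD l2 a / 2 * (s - a) ^ 2 ≤ Glog l2 s := by
  have hsub : ∀ t ∈ Icc a s, t ∈ Ioo (-1) 1 := fun t ht =>
    ⟨by linarith [ht.1], by linarith [ht.2]⟩
  refine taylor_two_le_of_deriv2_ge has (fun t ht => hasDerivAt_Glog l2 (hsub t ht))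
    (fun t ht => hasDerivAt_GlogD l2 (hsub t ht)) fun t ht => ?_
  exact GlogDD_le_GlogDD hl2 (by nlinarith [ht.1]) (by nlinarith [ht.2, ht.1])

theorem taylor_Glog_le_of_le_neg {l2 a s : ℝ} (hl2 : 0 ≤ l2) (ha : 0 ≤ a) (hsa : s ≤ -a)
    (hs : -1 < s) :
    Glog l2 (-a) + GlogD l2 (-a) * (s - -a) + GlogDD l2 (-a) / 2 * (s - -a) ^ 2
      ≤ Glog l2 s := by
  have h := taylor_Glog_le_of_le hl2 ha (le_neg_of_le_neg hsa) (neg_lt.mp hs)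
  rw [Glog_neg] at h
  rw [Glog_neg, GlogD_neg, GlogDD_neg]
  convert h using 2 <;> ring

theorem Feps_le_Flog_general (l1 l2 : ℝ) (hl2 : 0 < l2)
    (ε : ℝ) (hε : ε ∈ Set.Ioo 0 (1 - Real.sqrt (1 - l2 / l1))) :
    ∀ s ∈ Set.Ioo (-1 : ℝ) 1,
      Feps l1 l2 ε s ≤ Flog l1 l2 s ∧ Geps l2 ε s ≤ Glog l2 s := by
  intro s hs
  have ha : 0 ≤ 1 - ε := by linarith [hε.2, Real.sqrt_nonneg (1 - l2 / l1)]
  have hG : Geps l2 ε s ≤ Glog l2 s := by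
    unfold Geps
    split_ifs with hright hleft
    · exact taylor_Glog_le_of_le hl2.le ha hright hs.2
    · simpa only [neg_sub', sub_neg_eq_add, neg_neg, neg_add_eq_sub] using
        taylor_Glog_le_of_le_neg hl2.le ha (by linarith) hs.1
    · exact le_rfl
  exact ⟨by unfold Feps Flog; linarith, hG⟩

/-- For every `ε ∈ (0, 1 − √(1 − λ₂/λ₁))` and every `s ∈ (−1,1)`, `F_ε(s) ≤ F(s)`;
equivalently `G_ε(s) ≤ G(s)`. -/
theorem Feps_le_Flog (l1 l2 : ℝ) (hl2 : 0 < l2) (hl : l2 < l1)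
    (ε : ℝ) (hε : ε ∈ Set.Ioo 0 (1 - Real.sqrt (1 - l2 / l1))) :
    ∀ s ∈ Set.Ioo (-1 : ℝ) 1,
      Feps l1 l2 ε s ≤ Flog l1 l2 s ∧ Geps l2 ε s ≤ Glog l2 s :=
  Feps_le_Flog_general l1 l2 hl2 ε hε
end
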